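/- Utility of the continuous exponential mechanism for a single quantile: Given a dataset X = {x_1 < x_2 < ... < x_n} ⊂ (a,b) and quantile q ∈ [0,1], the exponential mechanism with utility u(X,w) = −| |{x ∈ X : x < w}| − ⌊q·n⌋ | and privacy parameter ε outputs, with probability at least 1 − β, a point v such that Gap_X(o, v) ≤ 2·(log ψ − log β)/ε, where o is a true q-quantile and ψ = (b−a)/min_{k ∈ [n+1]}(x_k − x_{k−1}) with x_0 = a, x_{n+1} = b. -/

import Mathlib

/-! Since `o` is a true quantile, the utility of `v` is exactly `-Gap X o v`. Hence every output
violating the bound `t` has density at most `exp (-ε t / 2) / Z` with respect to Lebesgue measure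
on `(a, b)`, where `Z` is the normalising integral, and the bad event has probability at most
`exp (-ε t / 2) (b - a) / Z`. The number of data points below `w` is constant on each cell
`(x_k, x_{k+1})`; on the cell with `k = ⌊q n⌋` the utility vanishes, so `Z` is at least the
length of that cell, hence at least the minimal cell length `m`. The value of `t` is chosen so that
`exp (-ε t / 2) (b - a) / m = β`. -/

open MeasureTheory Real Finset

/-- `Gap X d₁ d₂` is the number of points of `X` in `[min(d₁,d₂), max(d₁,d₂))`. -/
noncomputable def Gap (X : Finset ℝ) (d₁ d₂ : ℝ) : ℕ :=
  (X.filter (fun x => min d₁ d₂ ≤ x ∧ x < max d₁ d₂)).card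

/-- The single-quantile utility function `u(X, w) = −| |{x ∈ X : x < w}| − ⌊q·|X|⌋ |`. -/
noncomputable def quantileUtility (q : ℝ) (X : Finset ℝ) (w : ℝ) : ℝ :=
  -|((X.filter (fun x => x < w)).card : ℝ) - (⌊q * X.card⌋ : ℤ)|

/-- The continuous exponential mechanism for a single quantile: it samples `v ∈ (a,b)`
with density proportional to `exp(ε·u(X,v)/2)`. -/
noncomputable def contExpMech (ε a b q : ℝ) (X : Finset ℝ) : Measure ℝ :=
  (volume.restrict (Set.Ioo a b)).withDensity
    (fun w => ENNReal.ofReal (Real.exp (ε * quantileUtility q X w / 2) /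
      ∫ w' in Set.Ioo a b, Real.exp (ε * quantileUtility q X w' / 2)))

noncomputable def countBelow (X : Finset ℝ) (w : ℝ) : ℕ :=
  (X.filter (fun x => x < w)).card

theorem countBelow_mono (X : Finset ℝ) : Monotone (countBelow X) := fun _ _ hvw =>
  card_le_card (monotone_filter_right X fun _ _ hy => hy.trans_le hvw)

theorem Gap_eq_abs_sub_countBelow (X : Finset ℝ) (d₁ d₂ : ℝ) :
    (Gap X d₁ d₂ : ℝ) = |(countBelow X d₂ : ℝ) - countBelow X d₁| := by
  wlog h : d₁ ≤ d₂ generalizing d₁ d₂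
  · rw [Gap, min_comm, max_comm, ← Gap, this d₂ d₁ (le_of_not_ge h), abs_sub_comm]
  have hsplit := card_filter_add_card_filter_not (s := X.filter (· < d₂)) (p := (· < d₁))
  rw [filter_filter, filter_filter] at hsplit
  rw [Gap, min_eq_left h, max_eq_right h, countBelow, countBelow, ← hsplit,
    filter_congr fun y _ => show y < d₂ ∧ y < d₁ ↔ y < d₁ from
      ⟨And.right, fun hy => ⟨hy.trans_le h, hy⟩⟩,
    filter_congr fun y _ => show y < d₂ ∧ ¬y < d₁ ↔ d₁ ≤ y ∧ y < d₂ by rw [not_lt, and_comm]]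
  push_cast
  rw [add_sub_cancel_left, abs_of_nonneg (Nat.cast_nonneg _)]

theorem quantileUtility_eq_neg_Gap {q : ℝ} {X : Finset ℝ} {o : ℝ}
    (ho : (countBelow X o : ℤ) = ⌊q * X.card⌋) (v : ℝ) :
    quantileUtility q X v = -Gap X o v := by
  rw [Gap_eq_abs_sub_countBelow, quantileUtility, ← ho]
  rfl

@[fun_prop]
theorem measurable_quantileUtility (q : ℝ) (X : Finset ℝ) : Measurable (quantileUtility q X) :=
  (((Nat.mono_cast.comp (countBelow_mono X)).measurable.sub_const _).abs).neg

theorem integrable_exp_quantileUtility {μ : Measure ℝ} [IsFiniteMeasure μ] {ε : ℝ} (hε : 0 ≤ ε)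
    (q : ℝ) (X : Finset ℝ) : Integrable (fun w => exp (ε * quantileUtility q X w / 2)) μ := by
  refine Integrable.of_bound (C := 1) (by fun_prop) (Filter.Eventually.of_forall fun w => ?_)
  have : quantileUtility q X w ≤ 0 := neg_nonpos.mpr (abs_nonneg _)
  rw [norm_of_nonneg (exp_nonneg _), exp_le_one_iff]
  nlinarith

theorem measureReal_le_setIntegral_exp {α : Type*} [MeasurableSpace α] {μ : Measure α}
    {f : α → ℝ} {s t : Set α} (hts : t ⊆ s) (ht : MeasurableSet t)
    (hf : IntegrableOn (fun w => exp (f w)) s μ) (hf0 : ∀ w ∈ t, f w = 0) :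
    μ.real t ≤ ∫ w in s, exp (f w) ∂μ :=
  calc μ.real t = ∫ w in t, exp (f w) ∂μ := by
        rw [setIntegral_congr_fun ht fun w hw => by rw [hf0 w hw, exp_zero], setIntegral_const,
          smul_eq_mul, mul_one]
    _ ≤ ∫ w in s, exp (f w) ∂μ :=
        setIntegral_mono_set hf (ae_of_all _ fun w => (exp_pos _).le) hts.eventuallyLE

theorem tilted_apply_le {α : Type*} [MeasurableSpace α] {μ : Measure α} [SFinite μ]
    {f : α → ℝ} {s : Set α} {c : ℝ} (hf : ∀ w ∈ s, f w ≤ c) :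
    μ.tilted f s ≤ ENNReal.ofReal (exp c / ∫ w, exp (f w) ∂μ) * μ s := by
  rw [tilted_apply, ← setLIntegral_const]
  exact setLIntegral_mono measurable_const fun w hw => ENNReal.ofReal_le_ofReal <|
    div_le_div_of_nonneg_right (exp_le_exp.mpr (hf w hw)) (integral_nonneg fun _ => (exp_pos _).le)

theorem tilted_restrict_Ioo_le {f : ℝ → ℝ} {a b c Z₀ : ℝ} {s : Set ℝ} (hab : a ≤ b)
    (hZ₀ : 0 < Z₀) (hZ : Z₀ ≤ ∫ w in Set.Ioo a b, exp (f w)) (hf : ∀ w ∈ s, f w ≤ c) :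
    (volume.restrict (Set.Ioo a b)).tilted f s ≤ ENNReal.ofReal (exp c * (b - a) / Z₀) :=
  calc (volume.restrict (Set.Ioo a b)).tilted f s
      ≤ ENNReal.ofReal (exp c / ∫ w in Set.Ioo a b, exp (f w)) * volume.restrict (Set.Ioo a b) s :=
        tilted_apply_le hf
    _ ≤ ENNReal.ofReal (exp c / ∫ w in Set.Ioo a b, exp (f w)) * ENNReal.ofReal (b - a) := by
        gcongr
        exact (measure_mono (Set.subset_univ s)).trans_eq
          (by rw [Measure.restrict_apply_univ, Real.volume_Ioo])
    _ = ENNReal.ofReal (exp c / (∫ w in Set.Ioo a b, exp (f w)) * (b - a)) :=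
        (ENNReal.ofReal_mul (div_nonneg (exp_pos c).le (hZ₀.trans_le hZ).le)).symm
    _ ≤ ENNReal.ofReal (exp c * (b - a) / Z₀) := by
        gcongr ENNReal.ofReal ?_
        rw [div_mul_eq_mul_div]
        gcongr

theorem ofReal_one_sub_le_of_measure_compl_le {α : Type*} [MeasurableSpace α] {μ : Measure α}
    [IsProbabilityMeasure μ] {s : Set α} {β : ℝ} (hβ : 0 ≤ β) (h : μ sᶜ ≤ ENNReal.ofReal β) :
    ENNReal.ofReal (1 - β) ≤ μ s := by
  rw [ENNReal.ofReal_sub _ hβ, ENNReal.ofReal_one, tsub_le_iff_right]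
  calc 1 = μ Set.univ := measure_univ.symm
    _ ≤ μ s + μ sᶜ := measure_univ_le_add_compl (μ := μ) s
    _ ≤ μ s + ENNReal.ofReal β := by gcongr

section Grid

variable {n : ℕ} {x : Fin (n + 2) → ℝ}

theorem injective_interior (hx : StrictMono x) :
    Function.Injective fun i : Fin n => x i.succ.castSucc :=
  hx.injective.comp ((Fin.castSucc_injective _).comp (Fin.succ_injective _))

theorem card_image_interior (hx : StrictMono x) :
    (univ.image fun i : Fin n => x i.succ.castSucc).card = n := by
  rw [card_image_of_injective _ (injective_interior hx), card_univ, Fintype.card_fin]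

theorem countBelow_image_interior_of_mem_Ioo (hx : StrictMono x) {k : Fin (n + 1)} {w : ℝ}
    (hw : w ∈ Set.Ioo (x k.castSucc) (x k.succ)) :
    countBelow (univ.image fun i : Fin n => x i.succ.castSucc) w = k := by
  have hlt : ∀ j, x j < w ↔ j ≤ k.castSucc := fun j =>
    ⟨fun h => le_of_not_gt fun hj =>
        (hw.2.trans_le (hx.monotone (Fin.castSucc_lt_iff_succ_le.mp hj))).not_gt h,
      fun hj => (hx.monotone hj).trans_lt hw.1⟩
  have hlt' : ∀ i : Fin n, x i.succ.castSucc < w ↔ (i : ℕ) < k := fun i =>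
    (hlt _).trans (by simp only [Fin.le_def, Fin.val_castSucc, Fin.val_succ]; omega)
  rw [countBelow, filter_image, card_image_of_injective _ (injective_interior hx)]
  simp only [hlt']
  rw [Fin.card_filter_val_lt, min_eq_right (Nat.lt_succ_iff.mp k.2)]

theorem inf'_sub_le_integral_exp_quantileUtility (hx : StrictMono x) {X : Finset ℝ}
    (hX : X = univ.image fun i : Fin n => x i.succ.castSucc) {q o ε : ℝ} (hε : 0 ≤ ε)
    (ho : (countBelow X o : ℤ) = ⌊q * n⌋) :
    univ.inf' univ_nonempty (fun k : Fin (n + 1) => x k.succ - x k.castSucc) ≤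
      ∫ w in Set.Ioo (x 0) (x (Fin.last (n + 1))), exp (ε * quantileUtility q X w / 2) := by
  have hcard : X.card = n := hX ▸ card_image_interior hx
  set k : Fin (n + 1) := ⟨countBelow X o, Nat.lt_succ_of_le (hcard ▸ card_filter_le _ _)⟩
  have hk : x k.castSucc ≤ x k.succ := hx.monotone Fin.castSucc_lt_succ.le
  have hsub : Set.Ioo (x k.castSucc) (x k.succ) ⊆ Set.Ioo (x 0) (x (Fin.last (n + 1))) :=
    Set.Ioo_subset_Ioo (hx.monotone (Fin.zero_le _)) (hx.monotone (Fin.le_last _))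
  calc _ ≤ x k.succ - x k.castSucc := inf'_le _ (mem_univ k)
    _ = volume.real (Set.Ioo (x k.castSucc) (x k.succ)) := by
        rw [volume_real_Ioo_of_le hk]
    _ ≤ _ := by
        refine measureReal_le_setIntegral_exp hsub measurableSet_Ioo
          (integrable_exp_quantileUtility hε q X) fun w hw => ?_
        have hwo : countBelow X w = k := hX ▸ countBelow_image_interior_of_mem_Ioo hx hw
        rw [quantileUtility_eq_neg_Gap (hcard ▸ ho), Gap_eq_abs_sub_countBelow, hwo, sub_self,
          abs_zero, neg_zero, mul_zero, zero_div]

end Grid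

theorem contExpMech_utility_general (n : ℕ) (x : Fin (n + 2) → ℝ) (hmono : StrictMono x)
    (a b : ℝ) (ha : x 0 = a) (hb : x (Fin.last (n + 1)) = b)
    (X : Finset ℝ) (hX : X = Finset.image (fun i : Fin n => x i.succ.castSucc) Finset.univ)
    (q : ℝ)
    (o : ℝ)
    (htrue : ((X.filter (fun y => y < o)).card : ℤ) = ⌊q * n⌋)
    (ε β : ℝ) (hε : 0 < ε) (hβ : β ∈ Set.Ioo (0 : ℝ) 1) :
    ENNReal.ofReal (1 - β) ≤
      contExpMech ε a b q X
        {v | (Gap X o v : ℝ) ≤ 2 * (Real.log ((b - a) /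
            (Finset.univ.inf' Finset.univ_nonempty
              (fun k : Fin (n + 1) => x k.succ - x k.castSucc))) - Real.log β) / ε} := by
  subst ha hb
  set m := univ.inf' univ_nonempty fun k : Fin (n + 1) => x k.succ - x k.castSucc
  set t := 2 * (log ((x (Fin.last (n + 1)) - x 0) / m) - log β) / ε
  have hab : x 0 < x (Fin.last (n + 1)) := hmono Fin.last_pos
  have hm : 0 < m := (lt_inf'_iff _).mpr fun k _ => sub_pos.mpr (hmono Fin.castSucc_lt_succ)
  have hZ := inf'_sub_le_integral_exp_quantileUtility hmono hX hε.le htrue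
  have : NeZero (volume.restrict (Set.Ioo (x 0) (x (Fin.last (n + 1))))) :=
    ⟨by simpa [Measure.restrict_eq_zero] using hab⟩
  have : IsProbabilityMeasure (contExpMech ε (x 0) (x (Fin.last (n + 1))) q X) :=
    isProbabilityMeasure_tilted (integrable_exp_quantileUtility hε.le q X)
  have hcard : (X.card : ℝ) = n := by rw [hX, card_image_interior hmono]
  have hba : x (Fin.last (n + 1)) - x 0 ≠ 0 := (sub_pos.mpr hab).ne'
  have htail : exp (-(ε * t) / 2) * (x (Fin.last (n + 1)) - x 0) / m = β := by
    rw [show -(ε * t) / 2 = log β - log ((x (Fin.last (n + 1)) - x 0) / m) by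
        simp only [t]; field_simp; ring,
      exp_sub, exp_log hβ.1, exp_log (div_pos (sub_pos.mpr hab) hm)]
    field_simp
  refine ofReal_one_sub_le_of_measure_compl_le hβ.1.le (htail ▸ ?_)
  -- `contExpMech ε a b q X` is by definition Lebesgue measure on `(a, b)` tilted by `ε u / 2`.
  refine tilted_restrict_Ioo_le hab.le hm hZ fun v hv => ?_
  rw [quantileUtility_eq_neg_Gap (by rw [hcard]; exact htrue)]
  have hgap : t < Gap X o v := not_le.mp hv
  nlinarith

/-- Utility of the continuous exponential mechanism for a single quantile: on a dataset
`X = {x_1 < … < x_n} ⊂ (a,b)` (with `x_0 = a`, `x_{n+1} = b`), with probability at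
least `1 − β` the mechanism outputs `v` with
`Gap_X(o, v) ≤ 2·(log ψ − log β)/ε`, where `o` is a true `q`-quantile and
`ψ = (b−a)/min_k (x_k − x_{k−1})`. -/
theorem contExpMech_utility (n : ℕ) (x : Fin (n + 2) → ℝ) (hmono : StrictMono x)
    (a b : ℝ) (ha : x 0 = a) (hb : x (Fin.last (n + 1)) = b)
    (X : Finset ℝ) (hX : X = Finset.image (fun i : Fin n => x i.succ.castSucc) Finset.univ)
    (q : ℝ) (hq : q ∈ Set.Icc (0 : ℝ) 1)
    (o : ℝ) (ho : o ∈ Set.Ioo a b)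
    (htrue : ((X.filter (fun y => y < o)).card : ℤ) = ⌊q * n⌋)
    (ε β : ℝ) (hε : 0 < ε) (hβ : β ∈ Set.Ioo (0 : ℝ) 1) :
    ENNReal.ofReal (1 - β) ≤
      contExpMech ε a b q X
        {v | (Gap X o v : ℝ) ≤ 2 * (Real.log ((b - a) /
            (Finset.univ.inf' Finset.univ_nonempty
              (fun k : Fin (n + 1) => x k.succ - x k.castSucc))) - Real.log β) / ε} :=
  contExpMech_utility_general n x hmono a b ha hb X hX q o htrue ε β hε hβ
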